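/- arXiv:0902.1200 — 7 statements merged into one kernel-verified Lean document; each statement's English description precedes it below -/
import Mathlib

section
/- Let ρ, θ > 0, let z± be as above with z+ > z− > 0, and let α = z+/(z+ − z−). For each integer n ≥ 1, define G_n = ∫₀^{z−} zⁿ (z+ − z)^{−α} (z− − z)^{α−1} dz. Then the sequence G_n satisfies the recurrence (n+1)ρ G_{n+1} − (n+1)(1+ρ+θ) G_n + n G_{n−1} = 0 for all n ≥ 1. -/
/-!
Write `w z = (zp - z) ^ (-α) * (zm - z) ^ (α - 1)`. The boundary term
`F z = z ^ (m + 1) * (zp - z) ^ (1 - α) * (zm - z) ^ α` has derivative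
`((m + 1) zp zm z ^ m - (m + 2) (zp + zm) z ^ (m + 1) + (m + 2) z ^ (m + 2)) * w z`,
the terms linear in `α` collapsing because `α (zp - zm) = zp`. Since `F` vanishes at `0` and at
`zm` (as `α > 0`), integrating over `[0, zm]` gives a three-term recurrence for the moments of `w`;
multiplying by `ρ` and using Vieta's formulas `ρ zp zm = 1`, `ρ (zp + zm) = 1 + ρ + θ` for the roots
of `ρ z² - (1 + ρ + θ) z + 1` turns it into the stated one.
-/

open Real

section Roots

variable {ρ b zp zm : ℝ}

lemma vieta_sum (hρ : 0 < ρ) (hzp : zp = (b + √(b ^ 2 - 4 * ρ)) / (2 * ρ))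
    (hzm : zm = (b - √(b ^ 2 - 4 * ρ)) / (2 * ρ)) : ρ * (zp + zm) = b := by
  rw [hzp, hzm]; field_simp; ring

lemma vieta_prod (hρ : 0 < ρ) (hD : 0 ≤ b ^ 2 - 4 * ρ)
    (hzp : zp = (b + √(b ^ 2 - 4 * ρ)) / (2 * ρ))
    (hzm : zm = (b - √(b ^ 2 - 4 * ρ)) / (2 * ρ)) : ρ * (zp * zm) = 1 := by
  have hs := sq_sqrt hD
  rw [hzp, hzm]
  generalize √(b ^ 2 - 4 * ρ) = s at hs ⊢
  field_simp
  linear_combination (-1) * hs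

lemma smaller_root_pos (hρ : 0 < ρ) (hb : 0 < b)
    (hzm : zm = (b - √(b ^ 2 - 4 * ρ)) / (2 * ρ)) : 0 < zm := by
  have : √(b ^ 2 - 4 * ρ) < b := by
    rw [sqrt_lt' hb]; linarith
  rw [hzm]; exact div_pos (by linarith) (by linarith)

lemma smaller_root_lt (hρ : 0 < ρ) (hD : 0 < b ^ 2 - 4 * ρ)
    (hzp : zp = (b + √(b ^ 2 - 4 * ρ)) / (2 * ρ))
    (hzm : zm = (b - √(b ^ 2 - 4 * ρ)) / (2 * ρ)) : zm < zp := by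
  rw [hzp, hzm]; gcongr; linarith [sqrt_pos.2 hD]

end Roots

section Moments

noncomputable def weightedPower (zp zm α : ℝ) (n : ℕ) (z : ℝ) : ℝ :=
  z ^ n * (zp - z) ^ (-α) * (zm - z) ^ (α - 1)

noncomputable def boundaryTerm (zp zm α : ℝ) (n : ℕ) (z : ℝ) : ℝ :=
  z ^ n * (zp - z) ^ (1 - α) * (zm - z) ^ α

variable {zp zm α : ℝ}

lemma continuousOn_weightedPower (hzm : zm < zp) (hα : 1 ≤ α) (n : ℕ) :
    ContinuousOn (weightedPower zp zm α n) (Set.Iic zm) := by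
  refine ((continuous_pow n).continuousOn.mul ?_).mul ?_
  · exact (continuousOn_const.sub continuousOn_id).rpow_const
      fun z hz => Or.inl (sub_pos.2 ((Set.mem_Iic.1 hz).trans_lt hzm)).ne'
  · exact (continuousOn_const.sub continuousOn_id).rpow_const
      fun _ _ => Or.inr (by linarith)

lemma continuousOn_boundaryTerm (hzm : zm < zp) (hα : 0 ≤ α) (n : ℕ) :
    ContinuousOn (boundaryTerm zp zm α n) (Set.Iic zm) := by
  refine ((continuous_pow n).continuousOn.mul ?_).mul ?_
  · exact (continuousOn_const.sub continuousOn_id).rpow_const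
      fun z hz => Or.inl (sub_pos.2 ((Set.mem_Iic.1 hz).trans_lt hzm)).ne'
  · exact (continuousOn_const.sub continuousOn_id).rpow_const fun _ _ => Or.inr hα

lemma hasDerivAt_boundaryTerm (hαz : α * (zp - zm) = zp) (m : ℕ) {z : ℝ}
    (hz : z < zm) (hzm : zm < zp) :
    HasDerivAt (boundaryTerm zp zm α (m + 1))
      (((m : ℝ) + 1) * (zp * zm) * weightedPower zp zm α m z
        - ((m : ℝ) + 2) * (zp + zm) * weightedPower zp zm α (m + 1) z
        + ((m : ℝ) + 2) * weightedPower zp zm α (m + 2) z) z := by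
  have hp : 0 < zp - z := by linarith
  have hm : 0 < zm - z := by linarith
  have dp : HasDerivAt (fun y => (zp - y) ^ (1 - α)) ((α - 1) * (zp - z) ^ (-α)) z := by
    simpa using ((hasDerivAt_id z).const_sub zp).rpow_const (p := 1 - α) (Or.inl hp.ne')
  have dm : HasDerivAt (fun y => (zm - y) ^ α) (-(α * (zm - z) ^ (α - 1))) z := by
    simpa using ((hasDerivAt_id z).const_sub zm).rpow_const (p := α) (Or.inl hm.ne')
  refine (((hasDerivAt_pow (m + 1) z).mul dp).mul dm).congr_deriv ?_
  have ep : (zp - z) ^ (1 - α) = (zp - z) * (zp - z) ^ (-α) := by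
    rw [rpow_sub hp, rpow_one, rpow_neg hp.le, div_eq_mul_inv]
  have em : (zm - z) ^ α = (zm - z) * (zm - z) ^ (α - 1) := by
    conv_lhs => rw [← add_sub_cancel 1 α, rpow_add hm, rpow_one]
  simp only [weightedPower, Pi.mul_apply, ep, em, Nat.add_sub_cancel]
  push_cast
  linear_combination (-(z ^ (m + 1) * (zp - z) ^ (-α) * (zm - z) ^ (α - 1))) * hαz

lemma moment_recurrence (hzm0 : 0 ≤ zm) (hzm : zm < zp) (hα : 1 ≤ α)
    (hαz : α * (zp - zm) = zp) (m : ℕ) :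
    ((m : ℝ) + 1) * (zp * zm) * (∫ z in 0..zm, weightedPower zp zm α m z)
      - ((m : ℝ) + 2) * (zp + zm) * (∫ z in 0..zm, weightedPower zp zm α (m + 1) z)
      + ((m : ℝ) + 2) * (∫ z in 0..zm, weightedPower zp zm α (m + 2) z) = 0 := by
  have hIcc : Set.uIcc 0 zm ⊆ Set.Iic zm := by
    rw [Set.uIcc_of_le hzm0]; exact Set.Icc_subset_Iic_self
  have hint (n : ℕ) : IntervalIntegrable (weightedPower zp zm α n) MeasureTheory.volume 0 zm :=
    ((continuousOn_weightedPower hzm hα n).mono hIcc).intervalIntegrable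
  have hFTC := intervalIntegral.integral_eq_sub_of_hasDeriv_right_of_le hzm0
    ((continuousOn_boundaryTerm hzm (by linarith) (m + 1)).mono Set.Icc_subset_Iic_self)
    (fun z hz => (hasDerivAt_boundaryTerm hαz m hz.2 hzm).hasDerivWithinAt)
    ((((hint m).const_mul _).sub ((hint (m + 1)).const_mul _)).add ((hint (m + 2)).const_mul _))
  have hF_zero : boundaryTerm zp zm α (m + 1) 0 = 0 := by simp [boundaryTerm]
  have hF_zm : boundaryTerm zp zm α (m + 1) zm = 0 := by
    simp [boundaryTerm, zero_rpow (by linarith : α ≠ 0)]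
  rw [intervalIntegral.integral_add (((hint m).const_mul _).sub ((hint (m + 1)).const_mul _))
      ((hint (m + 2)).const_mul _),
    intervalIntegral.integral_sub ((hint m).const_mul _) ((hint (m + 1)).const_mul _),
    intervalIntegral.integral_const_mul, intervalIntegral.integral_const_mul,
    intervalIntegral.integral_const_mul, hF_zero, hF_zm, sub_zero] at hFTC
  exact hFTC

end Moments

theorem Gn_recurrence (ρ θ : ℝ) (hρ : 0 < ρ) (hθ : 0 < θ)
    (zp zm α : ℝ)
    (hzp : zp = (1 + ρ + θ + Real.sqrt ((1 + ρ + θ)^2 - 4*ρ)) / (2*ρ))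
    (hzm : zm = (1 + ρ + θ - Real.sqrt ((1 + ρ + θ)^2 - 4*ρ)) / (2*ρ))
    (hα : α = zp / (zp - zm))
    (G : ℕ → ℝ)
    (hG : ∀ n : ℕ, G n = ∫ z in (0:ℝ)..zm, z ^ n * (zp - z) ^ (-α) * (zm - z) ^ (α - 1)) :
    ∀ n : ℕ, 1 ≤ n →
      ((n : ℝ) + 1) * ρ * G (n + 1) - ((n : ℝ) + 1) * (1 + ρ + θ) * G n
        + (n : ℝ) * G (n - 1) = 0 := by
  intro n hn
  obtain ⟨m, rfl⟩ : ∃ m, n = m + 1 := ⟨n - 1, by omega⟩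
  have hD : 0 < (1 + ρ + θ) ^ 2 - 4 * ρ := by nlinarith [sq_nonneg (1 - ρ), mul_pos hρ hθ]
  have hzm0 : 0 < zm := smaller_root_pos hρ (by linarith) hzm
  have hlt : zm < zp := smaller_root_lt hρ hD hzp hzm
  have hαz : α * (zp - zm) = zp := by
    rw [hα]; exact div_mul_cancel₀ _ (sub_pos.2 hlt).ne'
  have hα1 : 1 ≤ α := by
    rw [hα, one_le_div (sub_pos.2 hlt)]; linarith
  have hrec := moment_recurrence hzm0.le hlt hα1 hαz m
  simp only [weightedPower, ← hG] at hrec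
  simp only [Nat.add_sub_cancel]
  push_cast
  linear_combination ρ * hrec + ((m : ℝ) + 2) * G (m + 1) * vieta_sum hρ hzp hzm
    - ((m : ℝ) + 1) * G m * vieta_prod hρ hD.le hzp hzm
end

section
/- For any ρ ∈ (0,1), the function Θ(N,T) = T(−1−ρ + sqrt(N²/T² + 4ρ)) + N·log[(1/(2ρ))(−N/T + sqrt(N²/T² + 4ρ))], defined for N, T > 0, satisfies the eikonal-type PDE Θ_T = ρ·e^{Θ_N} + e^{−Θ_N} − (1+ρ). -/
/-!
Θ is the perspective `T * φ (N / T)` of the profile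
`φ x = -1 - ρ + √(x² + 4ρ) + x L(x)`, `L(x) = log ((-x + √(x² + 4ρ)) / (2ρ))`.
Hence `Θ_N = φ'(N/T)` and `Θ_T = φ(N/T) - (N/T) φ'(N/T)`. Differentiating `φ`, the terms
coming from the square root cancel and `φ' = L`, so `Θ_T = -1 - ρ + √(x² + 4ρ)`.
Finally `ρ e^L + e^(-L) = √(x² + 4ρ)` because `(-x + √(x² + 4ρ)) (x + √(x² + 4ρ)) = 4ρ`.
-/

open Real

lemma neg_add_sqrt_sq_add_pos {c : ℝ} (hc : 0 < c) (x : ℝ) : 0 < -x + √(x ^ 2 + c) := by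
  have hx : |x| < √(x ^ 2 + c) := by
    rw [← sqrt_sq_eq_abs]
    exact sqrt_lt_sqrt (sq_nonneg x) (by linarith)
  linarith [le_abs_self x]

theorem HasDerivAt.perspective_left {f : ℝ → ℝ} {f' N T : ℝ} (hf : HasDerivAt f f' (N / T))
    (hT : T ≠ 0) : HasDerivAt (fun N' => T * f (N' / T)) f' N :=
  ((hf.comp N ((hasDerivAt_id N).div_const T)).const_mul T).congr_deriv (by field_simp)

theorem HasDerivAt.perspective_right {f : ℝ → ℝ} {f' N T : ℝ} (hf : HasDerivAt f f' (N / T))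
    (hT : T ≠ 0) : HasDerivAt (fun T' => T' * f (N / T')) (f (N / T) - N / T * f') T := by
  have hdiv : HasDerivAt (fun T' => N / T') (-(N / T ^ 2)) T := by
    simpa [div_eq_mul_inv] using (hasDerivAt_inv hT).const_mul N
  refine ((hasDerivAt_id T).mul (hf.comp T hdiv)).congr_deriv ?_
  simp only [id, Function.comp]
  field_simp
  ring

section Profile

variable {ρ : ℝ}

noncomputable def thetaSlope (ρ x : ℝ) : ℝ := log (1 / (2 * ρ) * (-x + √(x ^ 2 + 4 * ρ)))

noncomputable def thetaProfile (ρ x : ℝ) : ℝ := -1 - ρ + √(x ^ 2 + 4 * ρ) + x * thetaSlope ρ x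

theorem hasDerivAt_thetaProfile (hρ : 0 < ρ) (x : ℝ) :
    HasDerivAt (thetaProfile ρ) (thetaSlope ρ x) x := by
  set s := √(x ^ 2 + 4 * ρ)
  have hs : 0 < s := sqrt_pos.2 (by positivity)
  have hgap : 0 < -x + s := neg_add_sqrt_sq_add_pos (by positivity) x
  have hsqrt : HasDerivAt (fun y => √(y ^ 2 + 4 * ρ)) (x / s) x := by
    refine (((hasDerivAt_pow 2 x).add_const (4 * ρ)).sqrt (by positivity)).congr_deriv ?_
    field_simp
    ring
  have hslope : HasDerivAt (thetaSlope ρ) (-1 / s) x := by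
    have hinner : HasDerivAt (fun y => -y + √(y ^ 2 + 4 * ρ)) (-1 + x / s) x :=
      (hasDerivAt_neg x).add hsqrt
    refine ((hinner.const_mul (1 / (2 * ρ))).log (by positivity)).congr_deriv ?_
    show 1 / (2 * ρ) * (-1 + x / s) / (1 / (2 * ρ) * (-x + s)) = -1 / s
    field_simp
    ring
  refine ((hsqrt.const_add (-1 - ρ)).add ((hasDerivAt_id' x).mul hslope)).congr_deriv ?_
  field_simp
  ring

theorem rho_mul_exp_thetaSlope_add_exp_neg (hρ : 0 < ρ) (x : ℝ) :
    ρ * exp (thetaSlope ρ x) + exp (-thetaSlope ρ x) = √(x ^ 2 + 4 * ρ) := by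
  rw [thetaSlope]
  set s := √(x ^ 2 + 4 * ρ)
  have hs2 : s ^ 2 = x ^ 2 + 4 * ρ := sq_sqrt (by positivity)
  have hgap : 0 < -x + s := neg_add_sqrt_sq_add_pos (by positivity) x
  rw [exp_neg, exp_log (by positivity)]
  field_simp
  linear_combination -hs2

end Profile

theorem Theta_eikonal_general (ρ : ℝ) (hρ : 0 < ρ)
    (Θ : ℝ → ℝ → ℝ)
    (hΘ : ∀ N T : ℝ, Θ N T =
      T * (-1 - ρ + Real.sqrt (N^2 / T^2 + 4*ρ))
        + N * Real.log ((1 / (2*ρ)) * (-(N / T) + Real.sqrt (N^2 / T^2 + 4*ρ)))) :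
    ∀ N T : ℝ, 0 < N → 0 < T →
      deriv (fun T' => Θ N T') T
        = ρ * Real.exp (deriv (fun N' => Θ N' T) N)
          + Real.exp (-(deriv (fun N' => Θ N' T) N)) - (1 + ρ) := by
  intro N T _ hT
  have hperspective : ∀ N' T', T' ≠ 0 → Θ N' T' = T' * thetaProfile ρ (N' / T') := by
    intro N' T' hT'
    rw [hΘ, thetaProfile, thetaSlope, div_pow]
    field_simp
  have hΘ_N : deriv (fun N' => Θ N' T) N = thetaSlope ρ (N / T) := by
    simp_rw [hperspective _ T hT.ne']
    exact ((hasDerivAt_thetaProfile hρ _).perspective_left hT.ne').deriv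
  have hΘ_T : deriv (fun T' => Θ N T') T = -1 - ρ + √((N / T) ^ 2 + 4 * ρ) := by
    have hnear : (fun T' => T' * thetaProfile ρ (N / T')) =ᶠ[nhds T] fun T' => Θ N T' :=
      (eventually_ne_nhds hT.ne').mono fun T' hT' => (hperspective N T' hT').symm
    rw [(((hasDerivAt_thetaProfile hρ _).perspective_right hT.ne').congr_of_eventuallyEq
      hnear.symm).deriv, thetaProfile]
    ring
  rw [hΘ_T, hΘ_N, rho_mul_exp_thetaSlope_add_exp_neg hρ]
  ring

theorem Theta_eikonal (ρ : ℝ) (hρ : 0 < ρ) (hρ1 : ρ < 1)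
    (Θ : ℝ → ℝ → ℝ)
    (hΘ : ∀ N T : ℝ, Θ N T =
      T * (-1 - ρ + Real.sqrt (N^2 / T^2 + 4*ρ))
        + N * Real.log ((1 / (2*ρ)) * (-(N / T) + Real.sqrt (N^2 / T^2 + 4*ρ)))) :
    ∀ N T : ℝ, 0 < N → 0 < T →
      deriv (fun T' => Θ N T') T
        = ρ * Real.exp (deriv (fun N' => Θ N' T) N)
          + Real.exp (-(deriv (fun N' => Θ N' T) N)) - (1 + ρ) :=
  Theta_eikonal_general ρ hρ Θ hΘ
end

section
/- For any a with 0 < a ≤ (4√ρ/π)^{2/3} and ρ ∈ (0,1), the equation 2√ρ · C^{3/2} · a^{−3/2} = sqrt(C(1−C)) + π − arcsin(√C) has a unique solution C ∈ (0,1], with C = 1 exactly when a = (4√ρ/π)^{2/3}. -/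
/-!
Put `h C = (√(C(1-C)) + π - arcsin √C) / C^{3/2}` (`normalizedRhs`), so that the equation
reads `h C = 2√ρ a^{-3/2}`. Substituting `C = sin² θ` turns the numerator into `sin θ cos θ + π - θ`, whose derivative is
`-2 sin² θ < 0`; hence `h` is strictly decreasing on `(0, 1]`, with `h 1 = π/2` and `h C → ∞` as
`C → 0`. So `h` maps `(0, 1]` bijectively onto `[π/2, ∞)`, and `2√ρ a^{-3/2} ≥ π/2` exactly when
`a ≤ (4√ρ/π)^{2/3}`, with equality exactly at the endpoint.
-/

open Real Set Function

noncomputable def rhs (C : ℝ) : ℝ :=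
  √(C * (1 - C)) + π - arcsin √C

noncomputable def normalizedRhs (C : ℝ) : ℝ :=
  rhs C / C ^ ((3 : ℝ) / 2)

lemma pi_div_two_le_rhs (C : ℝ) : π / 2 ≤ rhs C := by
  have := arcsin_le_pi_div_two √C
  have := sqrt_nonneg (C * (1 - C))
  unfold rhs
  linarith

lemma strictAntiOn_sin_mul_cos_add_pi_sub :
    StrictAntiOn (fun θ ↦ sin θ * cos θ + π - θ) (Icc 0 (π / 2)) := by
  apply strictAntiOn_of_deriv_neg (convex_Icc _ _) (by fun_prop)
  intro θ hθ
  rw [interior_Icc] at hθ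
  have hderiv : HasDerivAt (fun θ ↦ sin θ * cos θ + π - θ)
      (cos θ * cos θ + sin θ * -sin θ - 1) θ :=
    (((hasDerivAt_sin θ).mul (hasDerivAt_cos θ)).add_const π).sub (hasDerivAt_id θ)
  have hsin : 0 < sin θ := sin_pos_of_pos_of_lt_pi hθ.1 (by linarith [hθ.2, pi_pos])
  rw [hderiv.deriv]
  nlinarith [sin_sq_add_cos_sq θ]

lemma rhs_eq_of_mem_Icc {C : ℝ} (hC : C ∈ Icc (0 : ℝ) 1) :
    rhs C = sin (arcsin √C) * cos (arcsin √C) + π - arcsin √C := by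
  rw [sin_arcsin (by linarith [sqrt_nonneg C]) (sqrt_le_one.2 hC.2), cos_arcsin, sq_sqrt hC.1,
    ← sqrt_mul hC.1, rhs]

lemma strictAntiOn_rhs : StrictAntiOn rhs (Icc 0 1) := by
  have arcsin_sqrt_mem {C : ℝ} (hC : C ∈ Icc (0 : ℝ) 1) : arcsin √C ∈ Icc 0 (π / 2) :=
    ⟨arcsin_nonneg.2 (sqrt_nonneg C), arcsin_le_pi_div_two _⟩
  have sqrt_mem {C : ℝ} (hC : C ∈ Icc (0 : ℝ) 1) : √C ∈ Icc (-1) 1 :=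
    ⟨by linarith [sqrt_nonneg C], sqrt_le_one.2 hC.2⟩
  intro x hx y hy hxy
  rw [rhs_eq_of_mem_Icc hx, rhs_eq_of_mem_Icc hy]
  exact strictAntiOn_sin_mul_cos_add_pi_sub (arcsin_sqrt_mem hx) (arcsin_sqrt_mem hy)
    (strictMonoOn_arcsin (sqrt_mem hx) (sqrt_mem hy) (sqrt_lt_sqrt hx.1 hxy))

lemma strictAntiOn_normalizedRhs : StrictAntiOn normalizedRhs (Ioc 0 1) := by
  intro x hx y hy hxy
  have hrhs : rhs y < rhs x := strictAntiOn_rhs ⟨hx.1.le, hx.2⟩ ⟨hy.1.le, hy.2⟩ hxy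
  have hpow : x ^ ((3 : ℝ) / 2) < y ^ ((3 : ℝ) / 2) := rpow_lt_rpow hx.1.le hxy (by norm_num)
  have hrhs_nonneg : 0 ≤ rhs x := le_trans (by linarith [pi_pos]) (pi_div_two_le_rhs x)
  exact div_lt_div₀ hrhs hpow.le hrhs_nonneg (rpow_pos_of_pos hx.1 _)

lemma normalizedRhs_one : normalizedRhs 1 = π / 2 := by
  simp [normalizedRhs, rhs]
  ring

lemma continuousOn_normalizedRhs : ContinuousOn normalizedRhs (Ioi 0) := by
  have hrhs : Continuous rhs := by
    unfold rhs
    exact ((continuous_sqrt.comp (by fun_prop)).add continuous_const).sub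
      (continuous_arcsin.comp continuous_sqrt)
  refine hrhs.continuousOn.div (fun C hC ↦ ?_) fun C hC ↦ (rpow_pos_of_pos hC _).ne'
  exact (continuousAt_rpow_const C _ (Or.inl hC.ne')).continuousWithinAt

lemma surjOn_normalizedRhs : SurjOn normalizedRhs (Ioc 0 1) (Ici (π / 2)) := by
  intro k (hk : π / 2 ≤ k)
  have hk_pos : 0 < k := lt_of_lt_of_le (by linarith [pi_pos]) hk
  have hbase : 0 < π / (2 * k) := by positivity
  -- `ε` is chosen so that the crude bound `π/2 ≤ rhs ε` already gives `k ≤ normalizedRhs ε`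
  set ε := (π / (2 * k)) ^ ((2 : ℝ) / 3)
  have hε_pos : 0 < ε := rpow_pos_of_pos hbase _
  have hε_le : ε ≤ 1 :=
    rpow_le_one hbase.le (by rw [div_le_one (by positivity)]; linarith) (by norm_num)
  have hε_pow : ε ^ ((3 : ℝ) / 2) = π / (2 * k) := by
    rw [← rpow_mul hbase.le]
    norm_num
  have hk_le : k ≤ normalizedRhs ε := by
    rw [normalizedRhs, hε_pow, le_div_iff₀ hbase]
    calc k * (π / (2 * k)) = π / 2 := by field_simp
      _ ≤ rhs ε := pi_div_two_le_rhs ε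
  have hcont : ContinuousOn normalizedRhs (Icc ε 1) :=
    continuousOn_normalizedRhs.mono fun x hx ↦ lt_of_lt_of_le hε_pos hx.1
  obtain ⟨C, hC, hCk⟩ := intermediate_value_Icc' hε_le hcont
    (⟨normalizedRhs_one ▸ hk, hk_le⟩ : k ∈ Icc (normalizedRhs 1) (normalizedRhs ε))
  exact ⟨C, ⟨lt_of_lt_of_le hε_pos hC.1, hC.2⟩, hCk⟩

lemma normalizedRhs_eq_iff {C : ℝ} (hC : 0 < C) (k : ℝ) :
    normalizedRhs C = k ↔ k * C ^ ((3 : ℝ) / 2) = rhs C := by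
  rw [normalizedRhs, div_eq_iff (rpow_pos_of_pos hC _).ne', eq_comm]

lemma rpow_neg_three_halves {a : ℝ} (ha : 0 ≤ a) :
    a ^ (-(3 : ℝ) / 2) = (a ^ ((3 : ℝ) / 2))⁻¹ := by
  rw [← rpow_neg ha]
  norm_num

lemma pi_div_two_le_two_mul_mul_rpow_iff {c a : ℝ} (hc : 0 ≤ c) (ha : 0 < a) :
    π / 2 ≤ 2 * c * a ^ (-(3 : ℝ) / 2) ↔ a ≤ (4 * c / π) ^ ((2 : ℝ) / 3) := by
  have hpow := rpow_pos_of_pos ha ((3 : ℝ) / 2)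
  rw [show (2 : ℝ) / 3 = ((3 : ℝ) / 2)⁻¹ by norm_num,
    le_rpow_inv_iff_of_pos ha.le (by positivity) (by norm_num), rpow_neg_three_halves ha.le,
    ← div_eq_mul_inv, le_div_iff₀ hpow, le_div_iff₀ pi_pos]
  constructor <;> intro h <;> linarith

lemma two_mul_mul_rpow_eq_pi_div_two_iff {c a : ℝ} (hc : 0 ≤ c) (ha : 0 < a) :
    2 * c * a ^ (-(3 : ℝ) / 2) = π / 2 ↔ a = (4 * c / π) ^ ((2 : ℝ) / 3) := by
  have hpow := rpow_pos_of_pos ha ((3 : ℝ) / 2)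
  rw [show (2 : ℝ) / 3 = ((3 : ℝ) / 2)⁻¹ by norm_num,
    eq_rpow_inv ha.le (by positivity) (by norm_num), rpow_neg_three_halves ha.le,
    ← div_eq_mul_inv, div_eq_iff hpow.ne', eq_div_iff pi_pos.ne']
  constructor <;> intro h <;> linarith

theorem C_equation_unique_solution_general (ρ : ℝ) :
    ∃ F : ℝ → ℝ,
      ∀ a : ℝ, 0 < a → a ≤ (4 * Real.sqrt ρ / π) ^ ((2:ℝ)/3) →
        F a ∈ Set.Ioc (0:ℝ) 1 ∧
        2 * Real.sqrt ρ * (F a) ^ ((3:ℝ)/2) * a ^ (-(3:ℝ)/2)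
          = Real.sqrt (F a * (1 - F a)) + π - Real.arcsin (Real.sqrt (F a)) ∧
        (∀ C : ℝ, C ∈ Set.Ioc (0:ℝ) 1 →
          2 * Real.sqrt ρ * C ^ ((3:ℝ)/2) * a ^ (-(3:ℝ)/2)
            = Real.sqrt (C * (1 - C)) + π - Real.arcsin (Real.sqrt C) → C = F a) ∧
        (F a = 1 ↔ a = (4 * Real.sqrt ρ / π) ^ ((2:ℝ)/3)) := by
  set k : ℝ → ℝ := fun a ↦ 2 * √ρ * a ^ (-(3 : ℝ) / 2)
  have equation_iff {a C : ℝ} (hC : 0 < C) :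
      2 * √ρ * C ^ ((3 : ℝ) / 2) * a ^ (-(3 : ℝ) / 2) = rhs C ↔ normalizedRhs C = k a := by
    rw [normalizedRhs_eq_iff hC, mul_right_comm]
  refine ⟨fun a ↦ invFunOn normalizedRhs (Ioc 0 1) (k a), fun a ha hle ↦ ?_⟩
  have hk := surjOn_normalizedRhs ((pi_div_two_le_two_mul_mul_rpow_iff (sqrt_nonneg ρ) ha).2 hle)
  have hF_mem := invFunOn_mem hk
  have hF_eq := invFunOn_eq hk
  refine ⟨hF_mem, (equation_iff hF_mem.1).2 hF_eq, fun C hC hCeq ↦ ?_, ?_⟩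
  · exact strictAntiOn_normalizedRhs.injOn hC hF_mem (((equation_iff hC.1).1 hCeq).trans hF_eq.symm)
  · rw [← two_mul_mul_rpow_eq_pi_div_two_iff (sqrt_nonneg ρ) ha, ← hF_eq, ← normalizedRhs_one]
    exact (strictAntiOn_normalizedRhs.injOn.eq_iff hF_mem ⟨one_pos, le_rfl⟩).symm

theorem C_equation_unique_solution (ρ : ℝ) (hρ : 0 < ρ) (hρ1 : ρ < 1) :
    ∃ F : ℝ → ℝ,
      ∀ a : ℝ, 0 < a → a ≤ (4 * Real.sqrt ρ / π) ^ ((2:ℝ)/3) →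
        F a ∈ Set.Ioc (0:ℝ) 1 ∧
        2 * Real.sqrt ρ * (F a) ^ ((3:ℝ)/2) * a ^ (-(3:ℝ)/2)
          = Real.sqrt (F a * (1 - F a)) + π - Real.arcsin (Real.sqrt (F a)) ∧
        (∀ C : ℝ, C ∈ Set.Ioc (0:ℝ) 1 →
          2 * Real.sqrt ρ * C ^ ((3:ℝ)/2) * a ^ (-(3:ℝ)/2)
            = Real.sqrt (C * (1 - C)) + π - Real.arcsin (Real.sqrt C) → C = F a) ∧
        (F a = 1 ↔ a = (4 * Real.sqrt ρ / π) ^ ((2:ℝ)/3)) :=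
  C_equation_unique_solution_general ρ
end

section
/- Define P_n for n ≥ 0 by P_n = (1/(2πi)) ∮_{C*} z^{−(n+1)}(1−z)^{−1} e^{1/(1−z)} dz (equivalently P_n = ∑_{l≥0} binom(n+l, l) / l!). Then P_n satisfies the three-term recurrence P_{n+1} − 2P_n + (n/(n+1)) P_{n−1} = 0 for all n ≥ 1. -/
/-!
The generating function `f z = (1 - z)⁻¹ * exp (1 / (1 - z))` of the `P n` solves
`(1 - z) ^ 2 * f' z = (2 - z) * f z`. Hence the derivative of `z ^ m * (1 - z) ^ 2 * f z` is
`m * z ^ (m - 1) * (1 - z) ^ 2 * f z + z ^ (m + 1) * f z`; its integral over a closed circle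
vanishes, and expanding `(1 - z) ^ 2` gives a three-term relation between the moments
`∮ z ^ k * f z`, which for `m = -n - 1` is the recurrence.
-/

open Real Complex Metric

noncomputable def genFun (z : ℂ) : ℂ := (1 - z)⁻¹ * exp (1 / (1 - z))

theorem hasDerivAt_genFun {z : ℂ} (hz : 1 - z ≠ 0) :
    HasDerivAt genFun ((2 - z) * genFun z / (1 - z) ^ 2) z := by
  have hsub : HasDerivAt (fun w : ℂ => 1 - w) (-1) z := (hasDerivAt_id z).const_sub 1
  refine ((hsub.inv hz).mul ((hasDerivAt_const z (1 : ℂ)).div hsub hz).cexp).congr_deriv ?_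
  simp only [genFun, Pi.div_apply, Pi.inv_apply]
  field_simp
  ring

section Moments

variable {f f' : ℂ → ℂ} {z : ℂ}

theorem hasDerivAt_zpow_mul_one_sub_sq_mul (m : ℤ) (hz : z ≠ 0) (hf : HasDerivAt f (f' z) z)
    (hode : (1 - z) ^ 2 * f' z = (2 - z) * f z) :
    HasDerivAt (fun w => w ^ m * ((1 - w) ^ 2 * f w))
      (m * (z ^ (m - 1) * f z - 2 * (z ^ m * f z) + z ^ (m + 1) * f z) + z ^ (m + 1) * f z)
      z := by
  have hsq : HasDerivAt (fun w : ℂ => (1 - w) ^ 2) (2 * (1 - z) * -1) z := by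
    simpa using ((hasDerivAt_id z).const_sub 1).fun_pow 2
  refine ((hasDerivAt_zpow m z (Or.inl hz)).mul (hsq.mul hf)).congr_deriv ?_
  have hpow : ∀ k : ℤ, z ^ (m + k) = z ^ m * z ^ k := fun k => zpow_add₀ hz m k
  rw [sub_eq_add_neg m 1, hpow, hpow, zpow_neg_one, zpow_one]
  simp only [Pi.mul_apply]
  field_simp
  linear_combination z * hode

theorem circleIntegral_zpow_mul_recurrence {R : ℝ} (hR : 0 < R)
    (hf : ∀ z ∈ sphere (0 : ℂ) R, HasDerivAt f (f' z) z)
    (hode : ∀ z ∈ sphere (0 : ℂ) R, (1 - z) ^ 2 * f' z = (2 - z) * f z) (m : ℤ) :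
    m * ((∮ z in C(0, R), z ^ (m - 1) * f z) - 2 * (∮ z in C(0, R), z ^ m * f z)
      + ∮ z in C(0, R), z ^ (m + 1) * f z) + (∮ z in C(0, R), z ^ (m + 1) * f z) = 0 := by
  have hz : ∀ z ∈ sphere (0 : ℂ) R, z ≠ 0 := fun z hz => ne_of_mem_sphere hz hR.ne'
  have hint (k : ℤ) : CircleIntegrable (fun z => z ^ k * f z) 0 R :=
    ContinuousOn.circleIntegrable hR.le <|
      ((continuousOn_id.zpow₀ k fun z hz' => Or.inl (hz z hz')).mul
        fun z hz' => (hf z hz').continuousAt.continuousWithinAt)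
  have hzero := circleIntegral.integral_eq_zero_of_hasDerivWithinAt hR.le fun z hz' =>
    (hasDerivAt_zpow_mul_one_sub_sq_mul m (hz z hz') (hf z hz') (hode z hz')).hasDerivWithinAt
  have hmul (a : ℂ) {g : ℂ → ℂ} (hg : CircleIntegrable g 0 R) :
      CircleIntegrable (fun z => a * g z) 0 R :=
    hg.const_fun_smul (a := a)
  have hdiff := (hint (m - 1)).fun_sub (hmul 2 (hint m))
  have hsum := hdiff.fun_add (hint (m + 1))
  rwa [circleIntegral.integral_add (hmul m hsum) (hint _), circleIntegral.integral_const_mul,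
    circleIntegral.integral_add hdiff (hint _),
    circleIntegral.integral_sub (hint _) (hmul 2 (hint m)), circleIntegral.integral_const_mul]
    at hzero

end Moments

theorem Pn_recurrence (r : ℝ) (hr0 : 0 < r) (hr1 : r < 1)
    (P : ℕ → ℂ)
    (hP : ∀ n : ℕ, P n = (1 / (2 * Real.pi * Complex.I)) *
      (∮ z in C(0, r), z ^ (-(n : ℤ) - 1) * (1 - z)⁻¹ * Complex.exp (1 / (1 - z)))) :
    ∀ n : ℕ, 1 ≤ n →
      P (n + 1) - 2 * P n + ((n : ℂ) / ((n : ℂ) + 1)) * P (n - 1) = 0 := by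
  intro n hn
  obtain ⟨k, rfl⟩ : ∃ k, n = k + 1 := ⟨n - 1, by omega⟩
  have hone : ∀ z ∈ sphere (0 : ℂ) r, 1 - z ≠ 0 := fun z hz h => by
    rw [mem_sphere_zero_iff_norm, ← sub_eq_zero.mp h, norm_one] at hz
    exact hr1.ne' hz
  have hrec := circleIntegral_zpow_mul_recurrence hr0
    (fun z hz => hasDerivAt_genFun (hone z hz)) (fun z hz => by field_simp [hone z hz])
    (-((k + 1 : ℕ) : ℤ) - 1)
  have hmoment (j : ℕ) :
      P j = 1 / (2 * π * I) * ∮ z in C(0, r), z ^ (-(j : ℤ) - 1) * genFun z := by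
    simp only [hP, genFun, mul_assoc]
  rw [hmoment, hmoment, hmoment, Nat.add_sub_cancel]
  rw [show -((k + 1 : ℕ) : ℤ) - 1 - 1 = -((k + 1 + 1 : ℕ) : ℤ) - 1 by push_cast; ring,
    show -((k + 1 : ℕ) : ℤ) - 1 + 1 = -(k : ℤ) - 1 by push_cast; ring] at hrec
  push_cast at hrec ⊢
  generalize (1 / (2 * π * I) : ℂ) = c
  have hk : (k : ℂ) + 1 + 1 ≠ 0 := by exact_mod_cast (k + 1).succ_ne_zero
  field_simp
  linear_combination -c * hrec
end

section
/- For ρ ∈ (0,1), the function H(Δ) = sqrt((1−ρ)/(1+ρ)) · (1/√(2π)) · ∫₀^∞ y^{ρ/(1−ρ)} exp(−((1−ρ)/(2(1+ρ)))(y−Δ)²) dy satisfies the parabolic cylinder equation (1+ρ)H″(Δ) + (1−ρ)Δ H′(Δ) − ρ H(Δ) = 0 for all real Δ. -/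
/-!
Write `I_β(Δ) = ∫_{y>0} y^β exp(-c (y - Δ)²) dy`. Differentiating under the integral sign gives
`I_β' = 2c (I_{β+1} - Δ I_β)`, and integrating by parts in `y` gives
`2c (I_{β+1} - Δ I_β) = β I_{β-1}`; so `I_{β+1}' = (β + 1) I_β`, and combining the two,
`I_β'' + 2cΔ I_β' - 2cβ I_β = 0` for every `β > -1`. For `c = (1-ρ)/(2(1+ρ))` and
`β = ρ/(1-ρ)` this equation, multiplied by `1 + ρ`, is the parabolic cylinder equation for `H`.
-/

open Real MeasureTheory Set

namespace ParabolicCylinder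

noncomputable def gaussianMoment (c β Δ : ℝ) : ℝ := ∫ y in Ioi 0, y ^ β * exp (-c * (y - Δ) ^ 2)

lemma rpow_mul_exp_neg_mul_sub_sq_le {c x M y : ℝ} (hc : 0 ≤ c) (hx : |x| ≤ M) (hy : 0 ≤ y)
    (β : ℝ) :
    y ^ β * exp (-c * (y - x) ^ 2) ≤ exp (c * M ^ 2) * (y ^ β * exp (-(c / 2) * y ^ 2)) := by
  have hxM : x ^ 2 ≤ M ^ 2 := sq_le_sq' (abs_le.1 hx).1 (abs_le.1 hx).2
  have hexp : exp (-c * (y - x) ^ 2) ≤ exp (c * M ^ 2) * exp (-(c / 2) * y ^ 2) := by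
    rw [← exp_add, exp_le_exp]
    nlinarith [sq_nonneg (y - 2 * x)]
  calc y ^ β * exp (-c * (y - x) ^ 2)
      ≤ y ^ β * (exp (c * M ^ 2) * exp (-(c / 2) * y ^ 2)) := by gcongr
    _ = exp (c * M ^ 2) * (y ^ β * exp (-(c / 2) * y ^ 2)) := by ring

lemma abs_rpow_add_one_mul_exp_sub_le {c x M y : ℝ} (hc : 0 ≤ c) (hx : |x| ≤ M) (hy : 0 ≤ y)
    (β : ℝ) :
    |y ^ (β + 1) * exp (-c * (y - x) ^ 2) - x * (y ^ β * exp (-c * (y - x) ^ 2))|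
      ≤ exp (c * M ^ 2) * (y ^ (β + 1) * exp (-(c / 2) * y ^ 2)
        + M * (y ^ β * exp (-(c / 2) * y ^ 2))) := by
  have hA := rpow_mul_exp_neg_mul_sub_sq_le hc hx hy (β + 1)
  have hB := rpow_mul_exp_neg_mul_sub_sq_le hc hx hy β
  have hA₀ : 0 ≤ y ^ (β + 1) * exp (-c * (y - x) ^ 2) := by positivity
  have hB₀ : 0 ≤ y ^ β * exp (-c * (y - x) ^ 2) := by positivity
  generalize y ^ (β + 1) * exp (-c * (y - x) ^ 2) = A at *
  generalize y ^ β * exp (-c * (y - x) ^ 2) = B at *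
  calc |A - x * B| ≤ |A| + |x| * |B| := (abs_sub _ _).trans_eq (by rw [abs_mul])
    _ ≤ A + M * B := by
        rw [abs_of_nonneg hA₀, abs_of_nonneg hB₀]
        gcongr
    _ ≤ _ := by nlinarith [(abs_nonneg x).trans hx]

variable {c β : ℝ}

lemma integrableOn_rpow_mul_exp_neg_mul_sub_sq (hc : 0 < c) (hβ : -1 < β) (x : ℝ) :
    IntegrableOn (fun y ↦ y ^ β * exp (-c * (y - x) ^ 2)) (Ioi 0) := by
  refine ((integrableOn_rpow_mul_exp_neg_mul_sq (half_pos hc) hβ).const_mul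
    (exp (c * |x| ^ 2))).mono' ?_ ?_
  · refine ContinuousOn.aestronglyMeasurable ?_ measurableSet_Ioi
    exact .mul (fun y hy ↦ (continuousAt_rpow_const y β (.inl hy.ne')).continuousWithinAt)
      (by fun_prop)
  · refine (ae_restrict_iff' measurableSet_Ioi).2 (.of_forall fun y (hy : 0 < y) ↦ ?_)
    rw [norm_of_nonneg (by positivity)]
    exact rpow_mul_exp_neg_mul_sub_sq_le hc.le le_rfl hy.le β

lemma hasDerivAt_gaussianMoment (hc : 0 < c) (hβ : -1 < β) (Δ : ℝ) :
    HasDerivAt (gaussianMoment c β)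
      (2 * c * (gaussianMoment c (β + 1) Δ - Δ * gaussianMoment c β Δ)) Δ := by
  set M := |Δ| + 1
  have hβ1 : -1 < β + 1 := by linarith
  have hint := fun s (hs : -1 < s) x ↦ integrableOn_rpow_mul_exp_neg_mul_sub_sq hc hs x
  have hF'int := ((hint _ hβ1 Δ).sub ((hint β hβ Δ).const_mul Δ)).const_mul (2 * c)
  have hbound_int := ((Integrable.fun_add (integrableOn_rpow_mul_exp_neg_mul_sq (half_pos hc) hβ1)
    ((integrableOn_rpow_mul_exp_neg_mul_sq (half_pos hc) hβ).const_mul M)).const_mul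
    (exp (c * M ^ 2))).const_mul (2 * c)
  refine (hasDerivAt_integral_of_dominated_loc_of_deriv_le
    (F := fun x y ↦ y ^ β * exp (-c * (y - x) ^ 2))
    (F' := fun x y ↦ 2 * c * (y ^ (β + 1) * exp (-c * (y - x) ^ 2)
      - x * (y ^ β * exp (-c * (y - x) ^ 2))))
    (Metric.ball_mem_nhds Δ one_pos) (.of_forall fun x ↦ (hint β hβ x).aestronglyMeasurable)
    (hint β hβ Δ) hF'int.aestronglyMeasurable ?_ hbound_int ?_).2.congr_deriv ?_
  · refine (ae_restrict_iff' measurableSet_Ioi).2 (.of_forall fun y (hy : 0 < y) x hx ↦ ?_)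
    have hxM : |x| ≤ M := by
      have := abs_sub_abs_le_abs_sub x Δ
      rw [Metric.mem_ball, dist_eq_norm, norm_eq_abs] at hx
      linarith
    rw [norm_mul, norm_of_nonneg (by positivity), norm_eq_abs]
    exact mul_le_mul_of_nonneg_left (abs_rpow_add_one_mul_exp_sub_le hc.le hxM hy.le β)
      (by positivity)
  · refine (ae_restrict_iff' measurableSet_Ioi).2 (.of_forall fun y (hy : 0 < y) x _ ↦ ?_)
    refine ((((hasDerivAt_id x).const_sub y).pow 2).const_mul (-c)).exp.const_mul (y ^ β)
      |>.congr_deriv ?_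
    rw [rpow_add_one hy.ne']
    simp only [id, Pi.pow_apply]
    ring
  · rw [integral_const_mul, integral_sub (hint _ hβ1 Δ) ((hint β hβ Δ).const_mul Δ),
      integral_const_mul]
    rfl

/-- Integration by parts against `d/dy (y ^ β * exp (-c * (y - Δ) ^ 2))`; the boundary terms
vanish because `β > 0` and the integrand decays. -/
lemma gaussianMoment_recurrence (hc : 0 < c) (hβ : 0 < β) (Δ : ℝ) :
    2 * c * (gaussianMoment c (β + 1) Δ - Δ * gaussianMoment c β Δ)
      = β * gaussianMoment c (β - 1) Δ := by
  have hint := fun s (hs : -1 < s) ↦ integrableOn_rpow_mul_exp_neg_mul_sub_sq hc hs Δ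
  have hI₁ := hint (β + 1) (by linarith)
  have hI₀ := hint β (by linarith)
  have hA := hI₁.sub' (hI₀.const_mul Δ)
  have hB := (hint (β - 1) (by linarith)).const_mul β
  have hf'int := hB.sub' (hA.const_mul (2 * c))
  have hderiv : ∀ y ∈ Ioi (0 : ℝ), HasDerivAt (fun y ↦ y ^ β * exp (-c * (y - Δ) ^ 2))
      (β * (y ^ (β - 1) * exp (-c * (y - Δ) ^ 2)) - 2 * c * (y ^ (β + 1) * exp (-c * (y - Δ) ^ 2)
        - Δ * (y ^ β * exp (-c * (y - Δ) ^ 2)))) y := by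
    intro y (hy : 0 < y)
    refine ((hasDerivAt_rpow_const (.inl hy.ne')).mul
      ((((hasDerivAt_id y).sub_const Δ).pow 2).const_mul (-c)).exp).congr_deriv ?_
    rw [rpow_add_one hy.ne']
    simp only [id, Pi.pow_apply]
    ring
  have hcont : ContinuousWithinAt (fun y ↦ y ^ β * exp (-c * (y - Δ) ^ 2)) (Ici 0) 0 :=
    ((continuousAt_rpow_const 0 β (.inr hβ.le)).mul (by fun_prop)).continuousWithinAt
  have hftc := integral_Ioi_of_hasDerivAt_of_tendsto hcont hderiv hf'int
    (tendsto_zero_of_hasDerivAt_of_integrableOn_Ioi hderiv hf'int hI₀)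
  rw [integral_sub hB (hA.const_mul (2 * c)), integral_const_mul, integral_const_mul,
    integral_sub hI₁ (hI₀.const_mul Δ), integral_const_mul, zero_rpow hβ.ne',
    zero_mul, sub_zero] at hftc
  unfold gaussianMoment
  linarith

lemma gaussianMoment_ode (hc : 0 < c) (hβ : -1 < β) (Δ : ℝ) :
    deriv (deriv (gaussianMoment c β)) Δ + 2 * c * Δ * deriv (gaussianMoment c β) Δ
      - 2 * c * β * gaussianMoment c β Δ = 0 := by
  have hβ1 : -1 < β + 1 := by linarith
  have hderiv : deriv (gaussianMoment c β)
      = fun x ↦ 2 * c * (gaussianMoment c (β + 1) x - x * gaussianMoment c β x) :=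
    funext fun x ↦ (hasDerivAt_gaussianMoment hc hβ x).deriv
  have hderiv₂ : HasDerivAt
      (fun x ↦ 2 * c * (gaussianMoment c (β + 1) x - x * gaussianMoment c β x)) _ Δ :=
    (((hasDerivAt_gaussianMoment hc hβ1 Δ).sub
      ((hasDerivAt_id Δ).mul (hasDerivAt_gaussianMoment hc hβ Δ))).const_mul (2 * c))
  have hrec := gaussianMoment_recurrence hc (by linarith : 0 < β + 1) Δ
  rw [add_sub_cancel_right] at hrec
  rw [hderiv, hderiv₂.deriv]
  simp only [id]
  linear_combination 2 * c * hrec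

end ParabolicCylinder

open ParabolicCylinder

theorem H_parabolic_cylinder (ρ : ℝ) (hρ : 0 < ρ) (hρ1 : ρ < 1)
    (H : ℝ → ℝ)
    (hH : ∀ Δ : ℝ, H Δ = Real.sqrt ((1 - ρ) / (1 + ρ)) * (1 / Real.sqrt (2 * π)) *
      ∫ y in Set.Ioi (0:ℝ),
        y ^ (ρ / (1 - ρ)) * Real.exp (-((1 - ρ) / (2 * (1 + ρ))) * (y - Δ)^2)) :
    ∀ Δ : ℝ,
      (1 + ρ) * deriv (deriv H) Δ + (1 - ρ) * Δ * deriv H Δ - ρ * H Δ = 0 := by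
  have h1ρ : 0 < 1 - ρ := by linarith
  have hc : 0 < (1 - ρ) / (2 * (1 + ρ)) := by positivity
  have hα : -1 < ρ / (1 - ρ) := by
    rw [lt_div_iff₀ h1ρ]
    linarith
  have hH' : H = fun Δ ↦ √((1 - ρ) / (1 + ρ)) * (1 / √(2 * π)) *
      gaussianMoment ((1 - ρ) / (2 * (1 + ρ))) (ρ / (1 - ρ)) Δ := funext hH
  intro Δ
  have hode := gaussianMoment_ode hc hα Δ
  rw [hH', deriv_const_mul_field', deriv_const_mul_field']
  linear_combination (norm := skip) √((1 - ρ) / (1 + ρ)) * (1 / √(2 * π)) * (1 + ρ) * hode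
  field_simp
  ring
end

section
/- For ρ ∈ (0,1), the function H(Δ) = sqrt((1−ρ)/(1+ρ))·(1/√(2π))·∫₀^∞ y^{ρ/(1−ρ)} exp(−((1−ρ)/(2(1+ρ)))(y−Δ)²) dy satisfies H(Δ)/Δ^{ρ/(1−ρ)} → 1 as Δ → +∞. -/
open Real Filter Topology MeasureTheory Set

/-!
Substituting `y = Δ + t` gives
`H Δ / Δ ^ α = K * ∫ t in Ioi (-Δ), (1 + t / Δ) ^ α * exp (-c * t ^ 2)`
with `K` the prefactor of `H`, `α = ρ / (1 - ρ)` and `c = (1 - ρ) / (2 * (1 + ρ))`.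
For `Δ ≥ 1` the integrand is dominated by `(1 + |t|) ^ α * exp (-c * t ^ 2)`, so by dominated
convergence the integral tends to the Gaussian integral `√(π / c)`, and `K = 1 / √(π / c)`.
-/

theorem setIntegral_Ioi_comp_add_right {E : Type*} [NormedAddCommGroup E] [NormedSpace ℝ E]
    (f : ℝ → E) (a d : ℝ) : ∫ x in Ioi a, f (x + d) = ∫ x in Ioi (a + d), f x := by
  have := (measurePreserving_add_right volume d).setIntegral_preimage_emb
    (measurableEmbedding_addRight d) f (Ioi (a + d))
  rwa [preimage_add_const_Ioi, add_sub_cancel_right] at this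

theorem one_add_div_nonneg_of_neg_lt {Δ t : ℝ} (hΔ : 0 < Δ) (ht : -Δ < t) :
    0 ≤ 1 + t / Δ := by
  rw [one_add_div hΔ.ne']
  exact div_nonneg (by linarith) hΔ.le

theorem setIntegral_Ioi_zero_rpow_mul_exp_neg_mul_sub_sq {Δ : ℝ} (hΔ : 0 < Δ) (α b : ℝ) :
    ∫ y in Ioi 0, y ^ α * exp (-b * (y - Δ) ^ 2) =
      Δ ^ α * ∫ t in Ioi (-Δ), (1 + t / Δ) ^ α * exp (-b * t ^ 2) := by
  rw [← integral_const_mul, ← neg_add_cancel Δ, ← setIntegral_Ioi_comp_add_right]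
  refine setIntegral_congr_fun measurableSet_Ioi fun t ht => ?_
  rw [add_sub_cancel_right, show t + Δ = Δ * (1 + t / Δ) by field_simp; ring,
    mul_rpow hΔ.le (one_add_div_nonneg_of_neg_lt hΔ ht), mul_assoc]

theorem integrable_abs_rpow_mul_exp_neg_mul_sq {b : ℝ} (hb : 0 < b) {s : ℝ} (hs : -1 < s) :
    Integrable fun x : ℝ => |x| ^ s * exp (-b * x ^ 2) := by
  rw [← integrableOn_univ, ← Iio_union_Ici (a := (0 : ℝ)), integrableOn_union,
    integrableOn_Ici_iff_integrableOn_Ioi]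
  have hIoi : IntegrableOn (fun x : ℝ => |x| ^ s * exp (-b * x ^ 2)) (Ioi 0) :=
    (integrableOn_rpow_mul_exp_neg_mul_sq hb hs).congr_fun
      (fun x (hx : 0 < x) => by rw [abs_of_pos hx]) measurableSet_Ioi
  refine ⟨?_, hIoi⟩
  rw [← (Measure.measurePreserving_neg volume).integrableOn_comp_preimage
    (Homeomorph.neg ℝ).measurableEmbedding]
  simpa only [Function.comp_def, neg_sq, neg_preimage, neg_Iio, neg_zero, abs_neg] using hIoi

theorem one_add_rpow_le {x α : ℝ} (hx : 0 ≤ x) (hα : 0 ≤ α) :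
    (1 + x) ^ α ≤ 2 ^ α * (1 + x ^ α) := by
  calc (1 + x) ^ α ≤ (2 * max 1 x) ^ α := by
        gcongr
        linarith [le_max_left 1 x, le_max_right 1 x]
    _ = 2 ^ α * max 1 (x ^ α) := by
        rw [mul_rpow zero_le_two (by positivity), rpow_max zero_le_one hx hα, one_rpow]
    _ ≤ 2 ^ α * (1 + x ^ α) := by
        gcongr
        exact max_le (by linarith [rpow_nonneg hx α]) (by linarith)

theorem integrable_one_add_abs_rpow_mul_exp_neg_mul_sq {b : ℝ} (hb : 0 < b) {α : ℝ}
    (hα : 0 ≤ α) :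
    Integrable fun t : ℝ => (1 + |t|) ^ α * exp (-b * t ^ 2) := by
  refine Integrable.mono' (g := fun t => 2 ^ α * (exp (-b * t ^ 2) + |t| ^ α * exp (-b * t ^ 2)))
    (((integrable_exp_neg_mul_sq hb).add
      (integrable_abs_rpow_mul_exp_neg_mul_sq hb (by linarith))).const_mul _)
    (by fun_prop) (Eventually.of_forall fun t => ?_)
  rw [norm_of_nonneg (by positivity), ← one_add_mul, ← mul_assoc]
  gcongr
  exact one_add_rpow_le (abs_nonneg t) hα

theorem rpow_one_add_div_le_rpow_one_add_abs {Δ t α : ℝ} (hΔ : 1 ≤ Δ) (ht : -Δ < t)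
    (hα : 0 ≤ α) : (1 + t / Δ) ^ α ≤ (1 + |t|) ^ α := by
  have := one_add_div_nonneg_of_neg_lt (by linarith) ht
  gcongr
  rw [div_le_iff₀ (by positivity)]
  nlinarith [le_abs_self t, abs_nonneg t]

theorem tendsto_rpow_one_add_div_atTop (t α : ℝ) :
    Tendsto (fun Δ : ℝ => (1 + t / Δ) ^ α) atTop (𝓝 1) := by
  have h : Tendsto (fun Δ : ℝ => 1 + t / Δ) atTop (𝓝 1) := by
    simpa using (tendsto_const_nhds (x := (1 : ℝ))).add
      ((tendsto_const_nhds (x := t)).div_atTop tendsto_id)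
  simpa using h.rpow_const (Or.inl one_ne_zero)

theorem tendsto_setIntegral_Ioi_neg_rpow_one_add_div_mul_exp_neg_mul_sq {b : ℝ} (hb : 0 < b)
    {α : ℝ} (hα : 0 ≤ α) :
    Tendsto (fun Δ : ℝ => ∫ t in Ioi (-Δ), (1 + t / Δ) ^ α * exp (-b * t ^ 2)) atTop
      (𝓝 √(π / b)) := by
  simp_rw [← integral_gaussian, ← integral_indicator measurableSet_Ioi]
  refine tendsto_integral_filter_of_dominated_convergence
    (fun t => (1 + |t|) ^ α * exp (-b * t ^ 2)) (Eventually.of_forall fun Δ => ?_) ?_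
    (integrable_one_add_abs_rpow_mul_exp_neg_mul_sq hb hα) (Eventually.of_forall fun t => ?_)
  · exact (Measurable.aestronglyMeasurable (by fun_prop)).indicator measurableSet_Ioi
  · filter_upwards [eventually_ge_atTop 1] with Δ hΔ
    refine Eventually.of_forall fun t => ?_
    by_cases ht : t ∈ Ioi (-Δ)
    · have := one_add_div_nonneg_of_neg_lt (by linarith) ht
      rw [indicator_of_mem ht, norm_of_nonneg (by positivity)]
      exact mul_le_mul_of_nonneg_right (rpow_one_add_div_le_rpow_one_add_abs hΔ ht hα)
        (exp_pos _).le
    · rw [indicator_of_notMem ht, norm_zero]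
      positivity
  · have hmem : ∀ᶠ Δ in atTop, t ∈ Ioi (-Δ) :=
      (eventually_gt_atTop (-t)).mono fun Δ h => neg_lt.mpr h
    have hlim := (tendsto_rpow_one_add_div_atTop t α).mul_const (exp (-b * t ^ 2))
    rw [one_mul] at hlim
    refine hlim.congr' ?_
    filter_upwards [hmem] with Δ h
    rw [indicator_of_mem h]

theorem H_asymptotics (ρ : ℝ) (hρ : 0 < ρ) (hρ1 : ρ < 1)
    (H : ℝ → ℝ)
    (hH : ∀ Δ : ℝ, H Δ = Real.sqrt ((1 - ρ) / (1 + ρ)) * (1 / Real.sqrt (2 * π)) *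
      ∫ y in Set.Ioi (0:ℝ),
        y ^ (ρ / (1 - ρ)) * Real.exp (-((1 - ρ) / (2 * (1 + ρ))) * (y - Δ)^2)) :
    Tendsto (fun Δ : ℝ => H Δ / Δ ^ (ρ / (1 - ρ))) atTop (𝓝 1) := by
  set α := ρ / (1 - ρ)
  set c := (1 - ρ) / (2 * (1 + ρ))
  set K := √((1 - ρ) / (1 + ρ)) * (1 / √(2 * π))
  have hρ' : 0 < 1 - ρ := by linarith
  have hα : 0 ≤ α := div_nonneg hρ.le hρ'.le
  have hc : 0 < c := div_pos hρ' (by linarith)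
  have hK : K * √(π / c) = 1 := by
    simp only [K, c]
    rw [mul_assoc, one_div, ← sqrt_inv, ← sqrt_mul (by positivity),
      ← sqrt_mul (by positivity), sqrt_eq_one]
    field_simp [hρ'.ne']
  have hlim := (tendsto_setIntegral_Ioi_neg_rpow_one_add_div_mul_exp_neg_mul_sq hc hα).const_mul K
  rw [hK] at hlim
  refine hlim.congr' ?_
  filter_upwards [eventually_gt_atTop 0] with Δ hΔ
  rw [hH, setIntegral_Ioi_zero_rpow_mul_exp_neg_mul_sub_sq hΔ, mul_left_comm,
    mul_div_cancel_left₀ _ (rpow_pos_of_pos hΔ α).ne']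
end

section
/- The function pair (P₀, P₁) with P₀(ξ,τ) = (1/ξ)e^{−τ/ξ} and P₁(ξ,τ) = [(τ−1)/ξ² + (4τ−τ²)/(2ξ³) − 3τ²/(2ξ⁴) + τ³/(3ξ⁵)]·e^{−τ/ξ} satisfies the PDE ∂P₁/∂τ = ∂²P₀/∂ξ² + (1/ξ − 1)∂P₀/∂ξ + P₀/ξ² − P₁/ξ on ξ > 0, τ > 0, with initial condition P₁(ξ,0) = −1/ξ². -/
/-!
Both functions are a rational prefactor times `exp (-τ / ξ)`. Differentiating that factor in `τ`
multiplies it by `-1/ξ`, which produces exactly the term `-P₁/ξ` of the equation; the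
`ξ`-derivatives of `P₀` are again of this form, so after cancelling the exponential the equation
is an identity between rational functions of `ξ` and `τ`.
-/

open Real

theorem hasDerivAt_exp_neg_div_left (τ : ℝ) {ξ : ℝ} (hξ : ξ ≠ 0) :
    HasDerivAt (fun x => exp (-τ / x)) (exp (-τ / ξ) * (τ / ξ ^ 2)) ξ := by
  have h : HasDerivAt (fun x => -τ / x) (τ / ξ ^ 2) ξ := by
    simpa [div_eq_mul_inv] using (hasDerivAt_inv hξ).const_mul (-τ)
  exact h.exp

theorem hasDerivAt_mul_exp_neg_div {q : ℝ → ℝ} {q' τ : ℝ} (hq : HasDerivAt q q' τ) (ξ : ℝ) :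
    HasDerivAt (fun t => q t * exp (-t / ξ)) ((q' - q τ / ξ) * exp (-τ / ξ)) τ := by
  have h : HasDerivAt (fun t => exp (-t / ξ)) (exp (-τ / ξ) * (-1 / ξ)) τ :=
    ((hasDerivAt_id τ).neg.div_const ξ).exp
  exact (hq.mul h).congr_deriv (by ring)

theorem hasDerivAt_inv_mul_exp_neg_div (τ : ℝ) {ξ : ℝ} (hξ : ξ ≠ 0) :
    HasDerivAt (fun x => 1 / x * exp (-τ / x)) ((τ / ξ ^ 3 - 1 / ξ ^ 2) * exp (-τ / ξ)) ξ := by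
  have h : HasDerivAt (fun x : ℝ => 1 / x) (-(ξ ^ 2)⁻¹) ξ := by
    simpa [one_div] using hasDerivAt_inv hξ
  exact (h.mul (hasDerivAt_exp_neg_div_left τ hξ)).congr_deriv (by field_simp; ring)

theorem hasDerivAt_deriv_inv_mul_exp_neg_div (τ : ℝ) {ξ : ℝ} (hξ : ξ ≠ 0) :
    HasDerivAt (fun x => (τ / x ^ 3 - 1 / x ^ 2) * exp (-τ / x))
      ((2 / ξ ^ 3 - 4 * τ / ξ ^ 4 + τ ^ 2 / ξ ^ 5) * exp (-τ / ξ)) ξ := by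
  have h3 : HasDerivAt (fun x => τ / x ^ 3) _ ξ :=
    (hasDerivAt_const ξ τ).div (hasDerivAt_pow 3 ξ) (pow_ne_zero 3 hξ)
  have h2 : HasDerivAt (fun x => 1 / x ^ 2) _ ξ :=
    (hasDerivAt_const ξ (1 : ℝ)).div (hasDerivAt_pow 2 ξ) (pow_ne_zero 2 hξ)
  exact ((h3.sub h2).mul (hasDerivAt_exp_neg_div_left τ hξ)).congr_deriv
    (by simp only [Pi.sub_apply]; field_simp; ring)

theorem deriv_deriv_inv_mul_exp_neg_div (τ : ℝ) {ξ : ℝ} (hξ : ξ ≠ 0) :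
    deriv (fun x => deriv (fun y => 1 / y * exp (-τ / y)) x) ξ
      = (2 / ξ ^ 3 - 4 * τ / ξ ^ 4 + τ ^ 2 / ξ ^ 5) * exp (-τ / ξ) := by
  have h : (fun x => deriv (fun y => 1 / y * exp (-τ / y)) x)
      =ᶠ[nhds ξ] fun x => (τ / x ^ 3 - 1 / x ^ 2) * exp (-τ / x) := by
    filter_upwards [eventually_ne_nhds hξ] with x hx
    exact (hasDerivAt_inv_mul_exp_neg_div τ hx).deriv
  rw [h.deriv_eq]
  exact (hasDerivAt_deriv_inv_mul_exp_neg_div τ hξ).deriv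

theorem hasDerivAt_P1_prefactor (ξ τ : ℝ) :
    HasDerivAt (fun t => (t - 1) / ξ ^ 2 + (4 * t - t ^ 2) / (2 * ξ ^ 3) - 3 * t ^ 2 / (2 * ξ ^ 4)
        + t ^ 3 / (3 * ξ ^ 5))
      (1 / ξ ^ 2 + (4 - 2 * τ) / (2 * ξ ^ 3) - 3 * τ / ξ ^ 4 + τ ^ 2 / ξ ^ 5) τ := by
  have ht := hasDerivAt_id' τ
  have h2 := hasDerivAt_pow 2 τ
  have h3 := hasDerivAt_pow 3 τ
  refine ((((ht.sub_const 1).div_const (ξ ^ 2)).add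
    (((ht.const_mul 4).sub h2).div_const (2 * ξ ^ 3))).sub
    ((h2.const_mul 3).div_const (2 * ξ ^ 4))).add (h3.div_const (3 * ξ ^ 5)) |>.congr_deriv ?_
  push_cast
  ring

theorem P1_pde
    (P0 P1 : ℝ → ℝ → ℝ)
    (hP0 : ∀ ξ τ : ℝ, P0 ξ τ = (1 / ξ) * Real.exp (-τ / ξ))
    (hP1 : ∀ ξ τ : ℝ, P1 ξ τ =
      ((τ - 1) / ξ^2 + (4*τ - τ^2) / (2*ξ^3) - 3*τ^2 / (2*ξ^4) + τ^3 / (3*ξ^5))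
        * Real.exp (-τ / ξ)) :
    (∀ ξ τ : ℝ, 0 < ξ → 0 < τ →
      deriv (fun τ' => P1 ξ τ') τ
        = deriv (fun ξ' => deriv (fun ξ'' => P0 ξ'' τ) ξ') ξ
          + (1 / ξ - 1) * deriv (fun ξ' => P0 ξ' τ) ξ
          + P0 ξ τ / ξ^2 - P1 ξ τ / ξ) ∧
    (∀ ξ : ℝ, 0 < ξ → P1 ξ 0 = -(1 / ξ^2)) := by
  obtain rfl : P0 = fun ξ τ => 1 / ξ * exp (-τ / ξ) := funext₂ hP0
  obtain rfl : P1 = fun ξ τ => ((τ - 1) / ξ^2 + (4*τ - τ^2) / (2*ξ^3) - 3*τ^2 / (2*ξ^4)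
      + τ^3 / (3*ξ^5)) * exp (-τ / ξ) := funext₂ hP1
  refine ⟨fun ξ τ hξ _ => ?_, fun ξ _ => ?_⟩
  · rw [(hasDerivAt_mul_exp_neg_div (hasDerivAt_P1_prefactor ξ τ) ξ).deriv,
      deriv_deriv_inv_mul_exp_neg_div τ hξ.ne', (hasDerivAt_inv_mul_exp_neg_div τ hξ.ne').deriv]
    field_simp
    ring
  · norm_num [neg_div]
end
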